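/- For integers p, q with 2 ≤ p ≤ q, and for each σ ∈ {μ, μ_o, μ_d, μ_t}, there exists a connected graph G and a vertex x ∈ V(G) with G−x connected such that σ(G) = q and σ(G−x) = p. -/

import Mathlib

open SimpleGraph

/-- `u` and `v` are `X`-visible in `G`: there is a shortest `u,v`-walk whose
vertices meet `X` only possibly in `u` and `v`. -/
def IsMVisible {V : Type*} (G : SimpleGraph V) (X : Set V) (u v : V) : Prop :=
  ∃ P : G.Walk u v, P.length = G.dist u v ∧
    ∀ w ∈ P.support, w ∈ X → w = u ∨ w = v

/-- mutual-visibility set -/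
def IsMVSet {V : Type*} (G : SimpleGraph V) (X : Set V) : Prop :=
  ∀ u ∈ X, ∀ v ∈ X, IsMVisible G X u v

/-- outer mutual-visibility set -/
def IsOuterMVSet {V : Type*} (G : SimpleGraph V) (X : Set V) : Prop :=
  ∀ u ∈ X, ∀ v : V, IsMVisible G X u v

/-- dual mutual-visibility set -/
def IsDualMVSet {V : Type*} (G : SimpleGraph V) (X : Set V) : Prop :=
  (∀ u ∈ X, ∀ v ∈ X, IsMVisible G X u v) ∧
  (∀ u ∉ X, ∀ v ∉ X, IsMVisible G X u v)

/-- total mutual-visibility set -/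
def IsTotalMVSet {V : Type*} (G : SimpleGraph V) (X : Set V) : Prop :=
  ∀ u v : V, IsMVisible G X u v

/-- the mutual-visibility number μ(G) -/
noncomputable def mu {V : Type*} (G : SimpleGraph V) : ℕ :=
  sSup {n | ∃ X : Set V, IsMVSet G X ∧ X.ncard = n}

/-- the outer mutual-visibility number μₒ(G) -/
noncomputable def muO {V : Type*} (G : SimpleGraph V) : ℕ :=
  sSup {n | ∃ X : Set V, IsOuterMVSet G X ∧ X.ncard = n}

/-- the dual mutual-visibility number μ_d(G) -/
noncomputable def muD {V : Type*} (G : SimpleGraph V) : ℕ :=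
  sSup {n | ∃ X : Set V, IsDualMVSet G X ∧ X.ncard = n}

/-- the total mutual-visibility number μ_t(G) -/
noncomputable def muT {V : Type*} (G : SimpleGraph V) : ℕ :=
  sSup {n | ∃ X : Set V, IsTotalMVSet G X ∧ X.ncard = n}

/-! In both constructions the graph and its vertex-deleted subgraph have a total
mutual-visibility set that is as large as any mutual-visibility set, which pins all four
numbers at once.

For `p = q`, delete an end of the missing edge of `K_{p+1} - e`: a common neighbour of the
missing edge sees everything, so the other `p` vertices form a total set, and what is left is
`K_p`. For `p < q`, delete the apex of the cone over a broom on `q` vertices with `p` leaves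
(`p - 1` of them hanging from one end of a path): the base of the cone is a total set of size
`q`. In the broom the leaves form a total set. Conversely, each vertex of the path separates
the part of the path before it from the rest of the broom, so a mutual-visibility set with three
elements contains at most one vertex of the path besides the hanging leaves. -/

namespace SimpleGraph

variable {V : Type*} {G : SimpleGraph V} {u v : V}

lemma Walk.length_eq_dist_of_forall_le (P : G.Walk u v)
    (h : ∀ Q : G.Walk u v, P.length ≤ Q.length) : P.length = G.dist u v := by
  obtain ⟨Q, hQ⟩ := P.reachable.exists_walk_length_eq_dist
  exact le_antisymm (hQ ▸ h Q) (dist_le P)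

lemma Walk.le_add_length (f : V → ℕ) (hf : ∀ a b, G.Adj a b → f a ≤ f b + 1)
    (P : G.Walk u v) : f u ≤ f v + P.length := by
  induction P with
  | nil => simp
  | cons hadj _ ih => have := hf _ _ hadj; simp only [length_cons]; omega

lemma Walk.mem_support_of_exit (S : Set V) (t : V)
    (hS : ∀ a b, G.Adj a b → a ∈ S → b ∈ S ∨ b = t) (hu : u ∈ S) (hv : v ∉ S)
    (P : G.Walk u v) : t ∈ P.support := by
  induction P with
  | nil => exact absurd hu hv
  | cons hadj P ih =>
    rcases hS _ _ hadj hu with hb | rfl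
    · simp [ih hb hv]
    · simp

/-- Descending `f` inside `S` gives a walk of length `f u`, and no walk is shorter because `f`
drops by at most one along each edge and vanishes at `v`. -/
lemma exists_walk_length_eq_dist_of_potential (f : V → ℕ) (S : Set V)
    (hf : ∀ a b, G.Adj a b → f a ≤ f b + 1)
    (hdesc : ∀ w ∈ S, f w ≠ 0 → ∃ w' ∈ S, G.Adj w w' ∧ f w' + 1 = f w)
    (hzero : ∀ w ∈ S, f w = 0 → w = v) (hv : f v = 0) (hu : u ∈ S) :
    ∃ P : G.Walk u v, P.length = G.dist u v ∧ ∀ w ∈ P.support, w ∈ S := by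
  have descent : ∀ k, ∀ w ∈ S, f w = k →
      ∃ P : G.Walk w v, P.length = k ∧ ∀ z ∈ P.support, z ∈ S := by
    intro k
    induction k with
    | zero => rintro w hw hw0; obtain rfl := hzero w hw hw0; exact ⟨.nil, rfl, by simpa⟩
    | succ k ih =>
      intro w hw hwk
      obtain ⟨w', hw'S, hadj, hw'⟩ := hdesc w hw (by omega)
      obtain ⟨P, hPlen, hPS⟩ := ih w' hw'S (by omega)
      refine ⟨.cons hadj P, by simp [hPlen], ?_⟩
      simp only [Walk.support_cons, List.mem_cons, forall_eq_or_imp]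
      exact ⟨hw, hPS⟩
  obtain ⟨P, hPlen, hPS⟩ := descent (f u) u hu rfl
  refine ⟨P, P.length_eq_dist_of_forall_le fun Q => ?_, hPS⟩
  have := Q.le_add_length f hf
  omega

end SimpleGraph

section Visibility

variable {V W : Type*} {G : SimpleGraph V} {X : Set V} {u v : V}

lemma IsMVisible.refl : IsMVisible G X u u :=
  ⟨.nil, by simp, by simp⟩

lemma IsMVisible.of_adj (h : G.Adj u v) : IsMVisible G X u v :=
  ⟨h.toWalk, by simp [dist_eq_one_iff_adj.2 h], by simp⟩

lemma IsMVisible.of_adj_adj {w : V} (hne : u ≠ v) (hnadj : ¬G.Adj u v) (huw : G.Adj u w)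
    (hwv : G.Adj w v) (hw : w ∉ X) : IsMVisible G X u v := by
  let P : G.Walk u v := .cons huw hwv.toWalk
  have hdist := P.reachable.one_lt_dist_of_ne_of_not_adj hne hnadj
  refine ⟨P, le_antisymm ?_ (dist_le P), ?_⟩
  · simp only [P, Walk.length_cons, Walk.length_nil]; omega
  · simp only [P, Walk.support_cons, Walk.support_nil, List.mem_cons, List.not_mem_nil]
    rintro z (rfl | rfl | rfl | hz) hzX <;> first | simp | exact absurd hzX hw | exact hz.elim

lemma IsMVisible.reachable (h : IsMVisible G X u v) : G.Reachable u v :=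
  h.elim fun P _ => P.reachable

lemma isMVisible_of_potential (f : V → ℕ) (S : Set V)
    (hf : ∀ a b, G.Adj a b → f a ≤ f b + 1)
    (hdesc : ∀ w ∈ S, f w ≠ 0 → ∃ w' ∈ S, G.Adj w w' ∧ f w' + 1 = f w)
    (hzero : ∀ w ∈ S, f w = 0 → w = v) (hv : f v = 0) (hu : u ∈ S)
    (hSX : ∀ w ∈ S, w ∈ X → w = u ∨ w = v) : IsMVisible G X u v := by
  obtain ⟨P, hPlen, hPS⟩ := exists_walk_length_eq_dist_of_potential f S hf hdesc hzero hv hu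
  exact ⟨P, hPlen, fun w hw => hSX w (hPS w hw)⟩

lemma not_isMVisible_of_mem_support {t : V} (ht : t ∈ X) (htu : t ≠ u) (htv : t ≠ v)
    (hblock : ∀ P : G.Walk u v, t ∈ P.support) : ¬IsMVisible G X u v := by
  rintro ⟨P, -, hP⟩
  rcases hP t (hblock P) ht with rfl | rfl <;> contradiction

lemma IsMVisible.map_iso {G' : SimpleGraph W} (e : G ≃g G') (h : IsMVisible G X u v) :
    IsMVisible G' (e '' X) (e u) (e v) := by
  obtain ⟨P, hPlen, hP⟩ := h
  refine ⟨P.map e.toHom, ?_, ?_⟩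
  · refine (P.map e.toHom).length_eq_dist_of_forall_le fun Q => ?_
    have := dist_le ((Q.map e.symm.toHom).copy (e.symm_apply_apply u) (e.symm_apply_apply v))
    simp only [Walk.length_map, Walk.length_copy] at this ⊢
    omega
  · simp only [Walk.support_map, List.mem_map, Set.mem_image]
    rintro _ ⟨w, hw, rfl⟩ ⟨w', hw'X, hw'⟩
    obtain rfl : w' = w := e.injective hw'
    rcases hP w' hw hw'X with h | h <;> simp [h]

/-- The second vertex of a `u,v`-walk is an internal vertex. -/
lemma IsMVSet.ne_univ (hX : IsMVSet G X) (hne : u ≠ v) (hnadj : ¬G.Adj u v) :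
    X ≠ Set.univ := by
  rintro rfl
  obtain ⟨P, -, hP⟩ := hX u trivial v trivial
  cases P with
  | nil => exact hne rfl
  | @cons _ w _ hadj P =>
    rcases hP w (by simp) trivial with rfl | rfl
    · exact hadj.ne rfl
    · exact hnadj hadj

end Visibility

section MaximumTotal

variable {V W : Type*} {G : SimpleGraph V}

def HasMaximumTotalMVSet (G : SimpleGraph V) (k : ℕ) : Prop :=
  (∃ X, IsTotalMVSet G X ∧ X.ncard = k) ∧ ∀ X, IsMVSet G X → X.ncard ≤ k

/-- Total sets are outer and dual sets, and all of these are mutual-visibility sets. -/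
lemma HasMaximumTotalMVSet.mvNumbers_eq {k : ℕ} (h : HasMaximumTotalMVSet G k) :
    mu G = k ∧ muO G = k ∧ muD G = k ∧ muT G = k := by
  obtain ⟨⟨X₀, hX₀, hcard⟩, hle⟩ := h
  have hbound {P : Set V → Prop} (hP : ∀ X, P X → IsMVSet G X) (hX₀P : P X₀) :
      sSup {n | ∃ X, P X ∧ X.ncard = n} = k :=
    IsGreatest.csSup_eq ⟨⟨X₀, hX₀P, hcard⟩, by rintro _ ⟨X, hX, rfl⟩; exact hle X (hP X hX)⟩
  exact ⟨hbound (fun _ => id) fun u _ v _ => hX₀ u v,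
    hbound (fun _ hX u hu v _ => hX u hu v) fun u _ v => hX₀ u v,
    hbound (fun _ hX => hX.1) ⟨fun u _ v _ => hX₀ u v, fun u _ v _ => hX₀ u v⟩,
    hbound (fun _ hX u _ v _ => hX u v) hX₀⟩

lemma HasMaximumTotalMVSet.connected [Nonempty V] {k : ℕ} (h : HasMaximumTotalMVSet G k) :
    G.Connected := by
  obtain ⟨⟨X, hX, -⟩, -⟩ := h
  exact ⟨fun u v => (hX u v).reachable⟩

lemma HasMaximumTotalMVSet.of_iso {G' : SimpleGraph W} {k : ℕ} (e : G ≃g G')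
    (h : HasMaximumTotalMVSet G' k) : HasMaximumTotalMVSet G k := by
  obtain ⟨⟨X₀, hX₀, hcard⟩, hle⟩ := h
  refine ⟨⟨e.symm '' X₀, fun u v => ?_, ?_⟩, fun X hX => ?_⟩
  · simpa using (hX₀ (e u) (e v)).map_iso e.symm
  · rwa [Set.ncard_image_of_injective _ e.symm.injective]
  · rw [← Set.ncard_image_of_injective X e.injective]
    refine hle _ ?_
    rintro _ ⟨u, hu, rfl⟩ _ ⟨v, hv, rfl⟩
    exact (hX u hu v hv).map_iso e

lemma hasMaximumTotalMVSet_top [Finite V] :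
    HasMaximumTotalMVSet (⊤ : SimpleGraph V) (Nat.card V) := by
  refine ⟨⟨Set.univ, fun u v => ?_, Set.ncard_univ V⟩, fun X _ => Set.ncard_le_card X⟩
  obtain rfl | huv := eq_or_ne u v
  exacts [.refl, .of_adj huv]

lemma hasMaximumTotalMVSet_of_forall_adj [Finite V] (c : V) (hc : ∀ v, v ≠ c → G.Adj c v)
    {u v : V} (hne : u ≠ v) (hnadj : ¬G.Adj u v) :
    HasMaximumTotalMVSet G (Nat.card V - 1) := by
  refine ⟨⟨{c}ᶜ, fun a b => ?_, by rw [Set.ncard_compl, Set.ncard_singleton]⟩, fun X hX => ?_⟩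
  · obtain rfl | hab := eq_or_ne a b
    · exact .refl
    by_cases hadj : G.Adj a b
    · exact .of_adj hadj
    have hac : a ≠ c := by rintro rfl; exact hadj (hc b hab.symm)
    have hbc : b ≠ c := by rintro rfl; exact hadj (hc a hac).symm
    exact .of_adj_adj hab hadj (hc a hac).symm (hc b hbc) (by simp)
  · have := Set.ncard_lt_card (hX.ne_univ hne hnadj)
    omega

end MaximumTotal

namespace SimpleGraph

variable {W : Type*}

def addVertex (H : SimpleGraph W) (N : Set W) : SimpleGraph (Option W) where
  Adj
    | some a, some b => H.Adj a b
    | none, some b => b ∈ N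
    | some a, none => a ∈ N
    | none, none => False
  symm := ⟨by
    rintro (_ | a) (_ | b) h
    exacts [h, h, h, h.symm]⟩
  loopless := ⟨by
    rintro (_ | a) h
    exacts [h, H.loopless.irrefl a h]⟩

variable {H : SimpleGraph W} {N : Set W}

@[simp] lemma addVertex_adj_some_some {a b : W} :
    (H.addVertex N).Adj (some a) (some b) ↔ H.Adj a b :=
  Iff.rfl

@[simp] lemma addVertex_adj_none_some {b : W} : (H.addVertex N).Adj none (some b) ↔ b ∈ N :=
  Iff.rfl

@[simp] lemma addVertex_adj_some_none {a : W} : (H.addVertex N).Adj (some a) none ↔ a ∈ N :=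
  Iff.rfl

def addVertexInduceIso (H : SimpleGraph W) (N : Set W) :
    (H.addVertex N).induce {v | v ≠ none} ≃g H where
  toFun v := v.1.get (Option.ne_none_iff_isSome.1 v.2)
  invFun a := ⟨some a, Option.some_ne_none a⟩
  left_inv := by
    rintro ⟨_ | a, h⟩
    exacts [absurd rfl h, rfl]
  right_inv _ := rfl
  map_rel_iff' := by
    rintro ⟨_ | a, ha⟩ ⟨_ | b, hb⟩
    all_goals first | exact absurd rfl ha | exact absurd rfl hb | exact Iff.rfl

end SimpleGraph

lemma Fin.ncard_setOf_val_lt {N k : ℕ} (h : k ≤ N) : {w : Fin N | w.val < k}.ncard = k := by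
  have hrange : {w : Fin N | w.val < k} = Set.range (Fin.castLE h) := by
    ext w
    refine ⟨fun hw => ⟨⟨w.val, hw⟩, rfl⟩, ?_⟩
    rintro ⟨i, rfl⟩
    exact i.isLt
  rw [hrange, Set.ncard_range_of_injective (Fin.castLE_injective h), Nat.card_eq_fintype_card,
    Fintype.card_fin]

section Broom

variable {m n : ℕ}

/-- Leaves `0, …, m-1` hang from the vertex `m+n`, which ends the path `m — m+1 — ⋯ — m+n`. -/
def broom (m n : ℕ) : SimpleGraph (Fin (m + n + 1)) :=
  SimpleGraph.fromRel fun i j => (i.val < m ∧ j.val = m + n) ∨ (m ≤ i.val ∧ j.val = i.val + 1)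

lemma broom_adj {i j : Fin (m + n + 1)} :
    (broom m n).Adj i j ↔ (i.val < m ∧ j.val = m + n) ∨ (j.val < m ∧ i.val = m + n) ∨
      (m ≤ i.val ∧ j.val = i.val + 1) ∨ (m ≤ j.val ∧ i.val = j.val + 1) := by
  rw [broom, SimpleGraph.fromRel_adj]
  omega

/-- The distance from `w` to `v` in `broom m n`. -/
def broomDist (m n v w : ℕ) : ℕ :=
  if v < m then (if w = v then 0 else if w < m then 2 else m + n - w + 1)
  else if w < m then m + n - v + 1 else (w - v) + (v - w)

lemma broomDist_le_of_adj {v a b : Fin (m + n + 1)} (h : (broom m n).Adj a b) :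
    broomDist m n v a ≤ broomDist m n v b + 1 := by
  rw [broom_adj] at h
  have := b.isLt
  have := a.isLt
  unfold broomDist
  split_ifs <;> omega

lemma broom_isTotalMVSet (hn : 1 ≤ n) : IsTotalMVSet (broom m n) {w | w.val < m + 1} := by
  intro u v
  refine isMVisible_of_potential (fun w => broomDist m n v w) {w | m < w.val ∨ w = u ∨ w = v}
    (fun a b => broomDist_le_of_adj) (fun w hw hw0 => ?_) (fun w _ hw0 => ?_)
    (by simp [broomDist]) (by simp) (fun w hw hwX => by simp_all; omega)
  · have hv := v.isLt
    have hwv : w.val ≠ v.val := fun h => hw0 (by simp [broomDist, h])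
    have step (k : ℕ) (hk : k < m + n + 1) (hkS : m < k ∨ k = v.val)
        (hadj : (w.val < m ∧ k = m + n) ∨ (k < m ∧ w.val = m + n) ∨
          (m ≤ w.val ∧ k = w.val + 1) ∨ (m ≤ k ∧ w.val = k + 1))
        (hf : broomDist m n v k + 1 = broomDist m n v w) :
        ∃ w' ∈ {w : Fin (m + n + 1) | m < w.val ∨ w = u ∨ w = v}, (broom m n).Adj w w' ∧
          broomDist m n v w' + 1 = broomDist m n v w :=
      ⟨⟨k, hk⟩, by simp only [Set.mem_ofPred_eq, Fin.ext_iff]; omega, broom_adj.2 hadj, hf⟩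
    obtain h | h | h | h : (w.val = m + n ∧ v.val < m) ∨ w.val < m ∨
        (m ≤ w.val ∧ w.val < m + n ∧ (w.val < v.val ∨ v.val < m)) ∨
        (m ≤ v.val ∧ v.val < w.val) := by
      omega
    · exact step v.val v.isLt (Or.inr rfl) (by omega)
        (by simp only [broomDist]; split_ifs <;> omega)
    · exact step (m + n) (by omega) (Or.inl (by omega)) (by omega)
        (by simp only [broomDist]; split_ifs <;> omega)
    · exact step (w.val + 1) (by omega) (Or.inl (by omega)) (by omega)
        (by simp only [broomDist]; split_ifs <;> omega)
    · exact step (w.val - 1) (by omega) (by omega) (by omega)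
        (by simp only [broomDist]; split_ifs <;> omega)
  · simp only [broomDist] at hw0
    ext
    split_ifs at hw0 <;> omega

lemma broom_mem_support {a b t : Fin (m + n + 1)} (ha : m ≤ a.val) (hat : a.val < t.val)
    (hb : b.val < m ∨ t.val < b.val) (P : (broom m n).Walk a b) : t ∈ P.support := by
  refine P.mem_support_of_exit {w | m ≤ w.val ∧ w.val < t.val} t (fun x y hxy hx => ?_) ⟨ha, hat⟩
    (by simp only [Set.mem_ofPred_eq]; omega)
  rw [broom_adj] at hxy
  have := t.isLt
  simp only [Set.mem_ofPred_eq, Fin.ext_iff] at hx ⊢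
  omega

lemma IsMVSet.broom_mem_Icc {X : Set (Fin (m + n + 1))} (hX : IsMVSet (broom m n) X)
    {a t b : Fin (m + n + 1)} (ha : a ∈ X) (ht : t ∈ X) (hb : b ∈ X) (hma : m ≤ a.val)
    (hat : a.val < t.val) : b.val ∈ Set.Icc m t.val := by
  by_contra hbt
  rw [Set.mem_Icc] at hbt
  refine not_isMVisible_of_mem_support ht (by omega) (fun h => hbt (by omega))
    (broom_mem_support hma hat (by omega)) (hX a ha b hb)

lemma IsMVSet.broom_path_subsingleton {X : Set (Fin (m + n + 1))} (hX : IsMVSet (broom m n) X)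
    (hX3 : 2 < X.ncard) : {w ∈ X | m ≤ w.val}.Subsingleton := by
  intro a ha t ht
  by_contra hne
  wlog hat : a.val < t.val generalizing a t
  · exact this ht ha (Ne.symm hne) (by omega)
  have hpair : ({a, t} : Set _).ncard < X.ncard :=
    (Set.ncard_insert_le a {t}).trans_lt (by rw [Set.ncard_singleton]; omega)
  obtain ⟨c, hc, hcat⟩ := Set.exists_mem_notMem_of_ncard_lt_ncard hpair
  simp only [Set.mem_insert_iff, Set.mem_singleton_iff, not_or, Fin.ext_iff] at hcat
  have hct := hX.broom_mem_Icc ha.1 ht.1 hc ha.2 hat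
  rw [Set.mem_Icc] at hct
  rcases lt_or_gt_of_ne hcat.1 with hca | hac
  · have := hX.broom_mem_Icc hc ha.1 ht.1 hct.1 hca
    exact absurd this.2 (by omega)
  · have := hX.broom_mem_Icc ha.1 hc ht.1 ha.2 hac
    exact absurd this.2 (by omega)

lemma IsMVSet.broom_ncard_le (hm : 1 ≤ m) {X : Set (Fin (m + n + 1))}
    (hX : IsMVSet (broom m n) X) : X.ncard ≤ m + 1 := by
  by_cases hX2 : X.ncard ≤ 2
  · omega
  have hpath := hX.broom_path_subsingleton (by omega)
  calc X.ncard ≤ (Finset.range (m + 1) : Set ℕ).ncard := by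
        refine Set.ncard_le_ncard_of_injOn (fun w => min w.val m) (fun w _ => by simp)
          (fun a ha b hb hab => ?_)
        by_cases hlt : a.val < m ∨ b.val < m
        · simp only at hab
          exact Fin.ext (by omega)
        · exact hpath ⟨ha, by omega⟩ ⟨hb, by omega⟩
    _ = m + 1 := by simp

lemma hasMaximumTotalMVSet_broom (hm : 1 ≤ m) (hn : 1 ≤ n) :
    HasMaximumTotalMVSet (broom m n) (m + 1) :=
  ⟨⟨_, broom_isTotalMVSet hn, Fin.ncard_setOf_val_lt (by omega)⟩, fun _ hX => hX.broom_ncard_le hm⟩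

end Broom

def HasOneVertexExtension (q p : ℕ) : Prop :=
  ∃ (W : Type) (_ : Finite W) (_ : Nonempty W) (H : SimpleGraph W) (N : Set W),
    HasMaximumTotalMVSet (H.addVertex N) q ∧ HasMaximumTotalMVSet H p

lemma hasOneVertexExtension_self {p : ℕ} (hp : 2 ≤ p) : HasOneVertexExtension p p := by
  obtain ⟨m, rfl⟩ : ∃ m, p = m + 2 := ⟨p - 2, by omega⟩
  refine ⟨Fin (m + 2), inferInstance, inferInstance, ⊤, {v | v ≠ 0}, ?_,
    by simpa using hasMaximumTotalMVSet_top (V := Fin (m + 2))⟩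
  have hhub : ∀ v, v ≠ some 1 →
      ((⊤ : SimpleGraph (Fin (m + 2))).addVertex {v | v ≠ 0}).Adj (some 1) v := by
    rintro (_ | v) hv
    · simp
    · simpa [eq_comm] using hv
  simpa [Finite.card_option] using
    hasMaximumTotalMVSet_of_forall_adj (some 1) hhub (u := none) (v := some 0) (by simp) (by simp)

lemma hasOneVertexExtension_of_lt {p q : ℕ} (hp : 2 ≤ p) (hpq : p < q) :
    HasOneVertexExtension q p := by
  obtain ⟨m, rfl⟩ : ∃ m, p = m + 1 := ⟨p - 1, by omega⟩
  obtain ⟨n, rfl⟩ : ∃ n, q = m + n + 1 := ⟨q - m - 1, by omega⟩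
  refine ⟨Fin (m + n + 1), inferInstance, inferInstance, broom m n, Set.univ, ?_,
    hasMaximumTotalMVSet_broom (by omega) (by omega)⟩
  have hhub : ∀ v, v ≠ none → ((broom m n).addVertex Set.univ).Adj none v := by
    rintro (_ | v) hv
    exacts [absurd rfl hv, Set.mem_univ v]
  simpa [Finite.card_option] using
    hasMaximumTotalMVSet_of_forall_adj none hhub (u := some ⟨0, by omega⟩) (v := some ⟨m, by omega⟩)
      (by simp; omega) (by simp [broom_adj]; omega)

theorem stmt_15 (p q : ℕ) (hp : 2 ≤ p) (hpq : p ≤ q) :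
    (∃ (V : Type) (G : SimpleGraph V) (x : V), Finite V ∧
      G.Connected ∧ (G.induce {v | v ≠ x}).Connected ∧
      mu G = q ∧ mu (G.induce {v | v ≠ x}) = p) ∧
    (∃ (V : Type) (G : SimpleGraph V) (x : V), Finite V ∧
      G.Connected ∧ (G.induce {v | v ≠ x}).Connected ∧
      muO G = q ∧ muO (G.induce {v | v ≠ x}) = p) ∧
    (∃ (V : Type) (G : SimpleGraph V) (x : V), Finite V ∧
      G.Connected ∧ (G.induce {v | v ≠ x}).Connected ∧
      muD G = q ∧ muD (G.induce {v | v ≠ x}) = p) ∧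
    (∃ (V : Type) (G : SimpleGraph V) (x : V), Finite V ∧
      G.Connected ∧ (G.induce {v | v ≠ x}).Connected ∧
      muT G = q ∧ muT (G.induce {v | v ≠ x}) = p) := by
  obtain ⟨W, _, _, H, N, hG, hH⟩ : HasOneVertexExtension q p := by
    rcases hpq.eq_or_lt with rfl | hlt
    exacts [hasOneVertexExtension_self hp, hasOneVertexExtension_of_lt hp hlt]
  have hGx := hH.of_iso (addVertexInduceIso H N)
  have hconn := hG.connected
  have hconnx := (addVertexInduceIso H N).connected_iff.2 hH.connected
  obtain ⟨hmu, hmuO, hmuD, hmuT⟩ := hG.mvNumbers_eq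
  obtain ⟨hmu', hmuO', hmuD', hmuT'⟩ := hGx.mvNumbers_eq
  exact ⟨⟨_, _, none, inferInstance, hconn, hconnx, hmu, hmu'⟩,
    ⟨_, _, none, inferInstance, hconn, hconnx, hmuO, hmuO'⟩,
    ⟨_, _, none, inferInstance, hconn, hconnx, hmuD, hmuD'⟩,
    ⟨_, _, none, inferInstance, hconn, hconnx, hmuT, hmuT'⟩⟩
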